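/- For K > 1 and any s ∈ ℝ^K, the gradient of the function s ↦ H(softmax s) vanishes at s if and only if softmax s equals the uniform distribution u_K, i.e., (softmax s)_k = 1/K for every k. -/

import Mathlib

open Real BigOperators

/-- The softmax map on `ℝ^K`. -/
noncomputable def softmax {K : ℕ} (s : EuclideanSpace ℝ (Fin K)) : EuclideanSpace ℝ (Fin K) :=
  (WithLp.equiv 2 (Fin K → ℝ)).symm fun k => Real.exp (s k) / ∑ j, Real.exp (s j)

/-- Cross-entropy `H(p, q) = -∑ k, p k * log (q k)`. -/
noncomputable def crossEntropy {K : ℕ} (p q : EuclideanSpace ℝ (Fin K)) : ℝ :=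
  -∑ k, p k * Real.log (q k)

/-- Entropy `H(p) = -∑ k, p k * log (p k)`. -/
noncomputable def entropy {K : ℕ} (p : EuclideanSpace ℝ (Fin K)) : ℝ :=
  -∑ k, p k * Real.log (p k)

/-- A probability vector: nonnegative components summing to 1. -/
def IsProbVec {K : ℕ} (p : EuclideanSpace ℝ (Fin K)) : Prop :=
  (∀ k, 0 ≤ p k) ∧ ∑ k, p k = 1

/-- The uniform distribution `u_K`, with every component `1/K`. -/
noncomputable def uniformDist (K : ℕ) : EuclideanSpace ℝ (Fin K) :=
  (WithLp.equiv 2 (Fin K → ℝ)).symm fun _ => 1 / (K : ℝ)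

/-!
Writing `p = softmax s` and `Z = ∑ j, exp (s j)`, we have `H(p) = log Z - ∑ k, p k * s k`, whose
gradient has components `p k * (∑ j, p j * s j - s k)`. As every `p k` is positive, the gradient
vanishes iff each `s k` equals its `p`-weighted mean, i.e. iff `s` is constant, i.e. iff all `p k`
are equal; since they sum to one, this means `p k = 1 / K`.
-/

section Finite

variable {ι : Type*} [Fintype ι]

theorem sum_exp_pos [Nonempty ι] (x : ι → ℝ) : 0 < ∑ j, exp (x j) :=
  Finset.sum_pos (fun j _ => exp_pos (x j)) Finset.univ_nonempty

theorem forall_eq_sum_mul_iff {p x : ι → ℝ} (hp : ∑ j, p j = 1) :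
    (∀ k, x k = ∑ j, p j * x j) ↔ ∀ j k, x j = x k := by
  refine ⟨fun h j k => (h j).trans (h k).symm, fun h k => ?_⟩
  calc x k = (∑ j, p j) * x k := by rw [hp, one_mul]
    _ = ∑ j, p j * x j := by
      rw [Finset.sum_mul]
      exact Finset.sum_congr rfl fun j _ => by rw [h j k]

theorem forall_eq_one_div_card_iff {p : ι → ℝ} (hp : ∑ j, p j = 1) :
    (∀ k, p k = 1 / Fintype.card ι) ↔ ∀ j k, p j = p k := by
  refine ⟨fun h j k => (h j).trans (h k).symm, fun h k => ?_⟩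
  have hcard : Fintype.card ι * p k = 1 := by
    rw [← hp, ← nsmul_eq_mul, ← Finset.card_univ, ← Finset.sum_const]
    exact Finset.sum_congr rfl fun j _ => (h j k).symm
  exact eq_one_div_of_mul_eq_one_right hcard

theorem EuclideanSpace.toDual_toLp (c : ι → ℝ) :
    InnerProductSpace.toDual ℝ (EuclideanSpace ℝ ι) (WithLp.toLp 2 c) =
      ∑ j, c j • EuclideanSpace.proj (𝕜 := ℝ) j := by
  ext x
  simp [PiLp.inner_apply, mul_comm]

theorem hasFDerivAt_sum_exp (s : EuclideanSpace ℝ ι) :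
    HasFDerivAt (fun t : EuclideanSpace ℝ ι => ∑ j, exp (t j))
      (∑ j, exp (s j) • EuclideanSpace.proj (𝕜 := ℝ) j) s :=
  HasFDerivAt.fun_sum fun j _ => (PiLp.hasFDerivAt_apply 2 s j).exp

theorem hasFDerivAt_sum_exp_mul_self (s : EuclideanSpace ℝ ι) :
    HasFDerivAt (fun t : EuclideanSpace ℝ ι => ∑ j, exp (t j) * t j)
      (∑ j, exp (s j) • EuclideanSpace.proj (𝕜 := ℝ) j +
        ∑ j, (exp (s j) * s j) • EuclideanSpace.proj (𝕜 := ℝ) j) s := by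
  rw [← Finset.sum_add_distrib]
  refine HasFDerivAt.fun_sum fun j _ => ?_
  have hproj := PiLp.hasFDerivAt_apply (𝕜 := ℝ) 2 s j
  refine (hproj.exp.fun_mul hproj).congr_fderiv ?_
  rw [smul_smul, mul_comm (s j)]

end Finite

section Softmax

variable {K : ℕ}

theorem softmax_apply (s : EuclideanSpace ℝ (Fin K)) (k : Fin K) :
    softmax s k = exp (s k) / ∑ j, exp (s j) :=
  rfl

theorem softmax_pos (s : EuclideanSpace ℝ (Fin K)) (k : Fin K) : 0 < softmax s k :=
  have : Nonempty (Fin K) := ⟨k⟩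
  div_pos (exp_pos _) (sum_exp_pos _)

theorem sum_softmax_mul [NeZero K] (s : EuclideanSpace ℝ (Fin K)) (x : Fin K → ℝ) :
    ∑ k, softmax s k * x k = (∑ k, exp (s k) * x k) / ∑ j, exp (s j) := by
  simp_rw [softmax_apply, div_mul_eq_mul_div, Finset.sum_div]

theorem sum_softmax [NeZero K] (s : EuclideanSpace ℝ (Fin K)) : ∑ k, softmax s k = 1 := by
  simpa [div_self (sum_exp_pos _).ne'] using sum_softmax_mul s 1

theorem softmax_eq_softmax_iff (s : EuclideanSpace ℝ (Fin K)) (j k : Fin K) :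
    softmax s j = softmax s k ↔ s j = s k := by
  have : Nonempty (Fin K) := ⟨k⟩
  rw [softmax_apply, softmax_apply, div_left_inj' (sum_exp_pos _).ne', exp_eq_exp]

theorem log_softmax (s : EuclideanSpace ℝ (Fin K)) (k : Fin K) :
    log (softmax s k) = s k - log (∑ j, exp (s j)) := by
  have : Nonempty (Fin K) := ⟨k⟩
  rw [softmax_apply, log_div (exp_ne_zero _) (sum_exp_pos _).ne', log_exp]

theorem entropy_softmax [NeZero K] (s : EuclideanSpace ℝ (Fin K)) :
    entropy (softmax s) = log (∑ j, exp (s j)) - ∑ k, softmax s k * s k := by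
  simp_rw [entropy, log_softmax, mul_sub, Finset.sum_sub_distrib, ← Finset.sum_mul, sum_softmax]
  ring

theorem hasGradientAt_entropy_softmax [NeZero K] (s : EuclideanSpace ℝ (Fin K)) :
    HasGradientAt (fun t => entropy (softmax t))
      (WithLp.toLp 2 fun k => softmax s k * (∑ j, softmax s j * s j - s k)) s := by
  have hZ : 0 < ∑ j, exp (s j) := sum_exp_pos _
  have hH : (fun t => entropy (softmax t)) = fun t : EuclideanSpace ℝ (Fin K) =>
      log (∑ j, exp (t j)) - (∑ j, exp (t j) * t j) * (∑ j, exp (t j))⁻¹ := by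
    ext t
    rw [entropy_softmax, sum_softmax_mul, div_eq_mul_inv]
  rw [hH, hasGradientAt_iff_hasFDerivAt, EuclideanSpace.toDual_toLp]
  refine (((hasFDerivAt_sum_exp s).log hZ.ne').sub ((hasFDerivAt_sum_exp_mul_self s).mul
    ((hasDerivAt_inv hZ.ne').comp_hasFDerivAt s (hasFDerivAt_sum_exp s)))).congr_fderiv ?_
  have hB : ∑ j, exp (s j) * s j = (∑ j, softmax s j * s j) * ∑ j, exp (s j) := by
    rw [sum_softmax_mul, div_mul_cancel₀ _ hZ.ne']
  rw [hB, Function.comp_apply]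
  set Z := ∑ j, exp (s j)
  set m := ∑ j, softmax s j * s j
  set P := ∑ j, exp (s j) • EuclideanSpace.proj (𝕜 := ℝ) j
  set Q := ∑ j, (exp (s j) * s j) • EuclideanSpace.proj (𝕜 := ℝ) j
  have hcoeff : ∑ k, (softmax s k * (m - s k)) • EuclideanSpace.proj (𝕜 := ℝ) k =
      (m / Z) • P - Z⁻¹ • Q := by
    simp only [P, Q, Finset.smul_sum, ← Finset.sum_sub_distrib, smul_smul, ← sub_smul,
      softmax_apply]
    congr! 2
    ring
  rw [hcoeff]
  match_scalars
  · field_simp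
    ring
  · ring

theorem gradient_entropy_softmax_eq_zero_iff [NeZero K] (s : EuclideanSpace ℝ (Fin K)) :
    gradient (fun t => entropy (softmax t)) s = 0 ↔ ∀ k, s k = ∑ j, softmax s j * s j := by
  rw [(hasGradientAt_entropy_softmax s).gradient, WithLp.toLp_eq_zero, funext_iff]
  refine forall_congr' fun k => ?_
  rw [Pi.zero_apply, mul_eq_zero, sub_eq_zero, or_iff_right (softmax_pos s k).ne', eq_comm]

end Softmax

/-- For `K > 1` and any `s ∈ ℝ^K`, the gradient of `s ↦ H(softmax s)` vanishes at
`s` iff `softmax s` is the uniform distribution, i.e. `(softmax s)_k = 1/K` for every `k`. -/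
theorem entropy_softmax_gradient_eq_zero_iff (K : ℕ) (hK : 1 < K)
    (s : EuclideanSpace ℝ (Fin K)) :
    gradient (fun s => entropy (softmax s)) s = 0 ↔
      ∀ k : Fin K, softmax s k = 1 / (K : ℝ) := by
  have : NeZero K := ⟨by omega⟩
  calc gradient (fun s => entropy (softmax s)) s = 0
      ↔ ∀ k, s k = ∑ j, softmax s j * s j := gradient_entropy_softmax_eq_zero_iff s
    _ ↔ ∀ j k, s j = s k := forall_eq_sum_mul_iff (sum_softmax s)
    _ ↔ ∀ j k, softmax s j = softmax s k := by simp only [softmax_eq_softmax_iff]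
    _ ↔ ∀ k, softmax s k = 1 / (K : ℝ) := by
      rw [← forall_eq_one_div_card_iff (sum_softmax s), Fintype.card_fin]
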